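/- There exists a constant C > 0 such that, for every n ≥ 2 (with 0 < 2r_n < n), one has Σ_{j=1}^{n} |α^n_j| ≤ C · n·ln(n)/r_n, and moreover Σ_{j=1+⌊n/r_n⌋}^{n−⌊n/r_n⌋−1} |1/β^n_j − 1| ≤ C · n·ln(n)/r_n. -/

import Mathlib

/-!
For `0 < j < n` the Dirichlet-kernel identity
`2 sin x ∑_{m=1}^r cos (2 m x) = sin ((2r+1) x) - sin x` at `x = jπ/n`, together with Jordan's
inequality `sin (jπ/n) ≥ 2 min(j, n-j)/n`, gives `|α^n_j| ≤ n / (2 r min(j, n-j))`. Summing,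
`∑_{j<n} |α^n_j|` is at most `n/r` times a harmonic sum, i.e. `O(n ln n / r)`; the term `j = n`
contributes `1`. In the range of the second sum `min(j, n-j) > n/r`, so `|α^n_j| < 1/2` and
`|1/β^n_j - 1| = |α^n_j| / |1 - α^n_j| ≤ 2 |α^n_j|`.
-/

open MeasureTheory ProbabilityTheory Real Filter Topology

noncomputable section

/-- The eigenvalues `α^n_j` of the interaction Hamiltonian. -/
def alpha (n r j : ℕ) : ℝ :=
  (1 / (r : ℝ)) * ∑ m ∈ Finset.Icc 1 r, Real.cos (2 * j * m * π / n)

/-- `β^n_j = 1 - α^n_j`. -/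
def beta (n r j : ℕ) : ℝ := 1 - alpha n r j

open Finset

lemma two_mul_sin_mul_sum_cos (x : ℝ) (r : ℕ) :
    2 * sin x * ∑ m ∈ Icc 1 r, cos (2 * m * x) = sin ((2 * r + 1) * x) - sin x := by
  induction r with
  | zero => simp
  | succ r ih =>
    rw [sum_Icc_succ_top (by omega), mul_add, ih]
    have h := sin_sub_sin ((2 * (r + 1 : ℕ) + 1) * x) ((2 * r + 1) * x)
    push_cast at h ⊢
    rw [show ((2 * (r + 1 : ℝ) + 1) * x - (2 * r + 1) * x) / 2 = x by ring,
      show ((2 * (r + 1 : ℝ) + 1) * x + (2 * r + 1) * x) / 2 = 2 * (r + 1) * x by ring] at h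
    linarith

lemma abs_sin_mul_abs_sum_cos_le_one (x : ℝ) (r : ℕ) :
    |sin x| * |∑ m ∈ Icc 1 r, cos (2 * m * x)| ≤ 1 := by
  have h := two_mul_sin_mul_sum_cos x r
  have hbound : |sin ((2 * r + 1) * x) - sin x| ≤ 2 := by
    rw [abs_le]
    constructor <;> linarith [sin_le_one ((2 * r + 1) * x), neg_one_le_sin ((2 * r + 1) * x),
      sin_le_one x, neg_one_le_sin x]
  rw [← h, abs_mul, abs_mul, abs_two] at hbound
  linarith

lemma two_mul_min_le_mul_sin (n k : ℕ) (hk : k ≤ n) :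
    2 * (min k (n - k) : ℕ) ≤ n * sin (k * π / n) := by
  rcases Nat.eq_zero_or_pos n with rfl | hn
  · simp_all
  have hn' : (0 : ℝ) < n := by exact_mod_cast hn
  -- Jordan's inequality applied to whichever of `k`, `n - k` is at most `n / 2`
  have jordan : ∀ i : ℕ, 2 * i ≤ n → 2 * (i : ℝ) ≤ n * sin (i * π / n) := by
    intro i hi
    have hi' : 2 * (i : ℝ) ≤ n := by exact_mod_cast hi
    have h := mul_le_sin (x := i * π / n) (by positivity)
      (by rw [div_le_div_iff₀ hn' two_pos]; nlinarith [pi_pos])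
    calc 2 * (i : ℝ) = n * (2 / π * (i * π / n)) := by field_simp
      _ ≤ n * sin (i * π / n) := by gcongr
  rcases le_total (2 * k) n with h | h
  · rw [min_eq_left (by omega)]
    exact jordan k h
  · rw [min_eq_right (by omega)]
    have hsym : sin (k * π / n) = sin ((n - k : ℕ) * π / n) := by
      rw [Nat.cast_sub hk, show ((n : ℝ) - k) * π / n = π - k * π / n by field_simp,
        sin_pi_sub]
    rw [hsym]
    exact jordan (n - k) (by omega)

lemma abs_alpha_le_one (n r j : ℕ) : |alpha n r j| ≤ 1 := by
  rcases Nat.eq_zero_or_pos r with rfl | hr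
  · simp [alpha]
  have hr' : (0 : ℝ) < r := by exact_mod_cast hr
  have hsum : |∑ m ∈ Icc 1 r, cos (2 * j * m * π / n)| ≤ r :=
    calc |∑ m ∈ Icc 1 r, cos (2 * j * m * π / n)|
        ≤ ∑ m ∈ Icc 1 r, |cos (2 * j * m * π / n)| := abs_sum_le_sum_abs _ _
      _ ≤ ∑ m ∈ Icc 1 r, 1 := sum_le_sum fun m _ => abs_cos_le_one _
      _ = r := by simp
  rw [alpha, abs_mul, abs_of_pos (by positivity), one_div_mul_eq_div, div_le_one hr']
  exact hsum

lemma abs_sin_mul_abs_alpha_le (n r j : ℕ) : r * |sin (j * π / n)| * |alpha n r j| ≤ 1 := by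
  rcases Nat.eq_zero_or_pos r with rfl | hr
  · simp
  have hr' : (0 : ℝ) < r := by exact_mod_cast hr
  have hcos : ∀ m ∈ Icc 1 r, cos (2 * j * m * π / n) = cos (2 * m * (j * π / n)) :=
    fun m _ => by ring_nf
  have h := abs_sin_mul_abs_sum_cos_le_one (j * π / n) r
  rw [alpha, sum_congr rfl hcos, abs_mul, abs_of_pos (by positivity : (0 : ℝ) < 1 / r)]
  calc r * |sin (j * π / n)| * (1 / r * |∑ m ∈ Icc 1 r, cos (2 * m * (j * π / n))|)
      = |sin (j * π / n)| * |∑ m ∈ Icc 1 r, cos (2 * m * (j * π / n))| := by field_simp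
    _ ≤ 1 := h

lemma two_mul_min_mul_abs_alpha_le (n r j : ℕ) (hj : j ≤ n) :
    2 * r * (min j (n - j) : ℕ) * |alpha n r j| ≤ n := by
  have hsin : 2 * ((min j (n - j) : ℕ) : ℝ) ≤ n * |sin (j * π / n)| :=
    (two_mul_min_le_mul_sin n j hj).trans (by gcongr; exact le_abs_self _)
  have h := abs_sin_mul_abs_alpha_le n r j
  calc 2 * r * (min j (n - j) : ℕ) * |alpha n r j|
      = r * |alpha n r j| * (2 * (min j (n - j) : ℕ)) := by ring
    _ ≤ r * |alpha n r j| * (n * |sin (j * π / n)|) := by gcongr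
    _ = n * (r * |sin (j * π / n)| * |alpha n r j|) := by ring
    _ ≤ n * 1 := by gcongr
    _ = n := mul_one _

lemma sum_Icc_one_sub_reflect {M : Type*} [AddCommMonoid M] (f : ℕ → M) (n : ℕ) :
    ∑ j ∈ Icc 1 (n - 1), f (n - j) = ∑ j ∈ Icc 1 (n - 1), f j := by
  refine sum_nbij' (n - ·) (n - ·) ?_ ?_ ?_ ?_ (fun _ _ => rfl) <;>
    intro j hj <;> simp only [mem_Icc] at hj ⊢ <;> omega

lemma sum_inv_min_le (n : ℕ) :
    ∑ j ∈ Icc 1 (n - 1), ((min j (n - j) : ℕ) : ℝ)⁻¹ ≤ 2 * (1 + log n) := by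
  have hharmonic : ∑ j ∈ Icc 1 (n - 1), (j : ℝ)⁻¹ ≤ 1 + log n :=
    calc ∑ j ∈ Icc 1 (n - 1), (j : ℝ)⁻¹ ≤ ∑ j ∈ Icc 1 n, (j : ℝ)⁻¹ :=
          sum_le_sum_of_subset_of_nonneg (Icc_subset_Icc_right (by omega))
            fun _ _ _ => by positivity
      _ = harmonic n := by simp [harmonic_eq_sum_Icc]
      _ ≤ 1 + log n := harmonic_le_one_add_log n
  have hmin : ∀ j ∈ Icc 1 (n - 1),
      ((min j (n - j) : ℕ) : ℝ)⁻¹ ≤ (j : ℝ)⁻¹ + ((n - j : ℕ) : ℝ)⁻¹ := by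
    intro j _
    rcases min_choice j (n - j) with h | h <;> rw [h] <;>
      linarith [inv_nonneg.2 (Nat.cast_nonneg (α := ℝ) j),
        inv_nonneg.2 (Nat.cast_nonneg (α := ℝ) (n - j))]
  calc ∑ j ∈ Icc 1 (n - 1), ((min j (n - j) : ℕ) : ℝ)⁻¹
      ≤ ∑ j ∈ Icc 1 (n - 1), ((j : ℝ)⁻¹ + ((n - j : ℕ) : ℝ)⁻¹) := sum_le_sum hmin
    _ = 2 * ∑ j ∈ Icc 1 (n - 1), (j : ℝ)⁻¹ := by
      rw [sum_add_distrib, sum_Icc_one_sub_reflect (fun k => (k : ℝ)⁻¹), two_mul]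
    _ ≤ 2 * (1 + log n) := by gcongr

lemma mul_sum_abs_alpha_le (n r : ℕ) :
    r * ∑ j ∈ Icc 1 (n - 1), |alpha n r j| ≤ n * (1 + log n) := by
  have hterm : ∀ j ∈ Icc 1 (n - 1),
      r * |alpha n r j| ≤ n / 2 * ((min j (n - j) : ℕ) : ℝ)⁻¹ := by
    intro j hj
    rw [mem_Icc] at hj
    have hmin : (0 : ℝ) < (min j (n - j) : ℕ) := by
      have : 0 < min j (n - j) := by omega
      exact_mod_cast this
    have h := two_mul_min_mul_abs_alpha_le n r j (by omega)
    rw [div_mul_eq_mul_div, le_div_iff₀ two_pos, ← div_eq_mul_inv, le_div_iff₀ hmin]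
    linarith
  calc r * ∑ j ∈ Icc 1 (n - 1), |alpha n r j|
      ≤ ∑ j ∈ Icc 1 (n - 1), n / 2 * ((min j (n - j) : ℕ) : ℝ)⁻¹ := by
        rw [mul_sum]; exact sum_le_sum hterm
    _ = n / 2 * ∑ j ∈ Icc 1 (n - 1), ((min j (n - j) : ℕ) : ℝ)⁻¹ := by rw [mul_sum]
    _ ≤ n / 2 * (2 * (1 + log n)) := by gcongr; exact sum_inv_min_le n
    _ = n * (1 + log n) := by ring

lemma abs_one_div_one_sub_sub_one_le {a : ℝ} (ha : |a| ≤ 1 / 2) :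
    |1 / (1 - a) - 1| ≤ 2 * |a| := by
  have hpos : 0 < 1 - a := by linarith [le_abs_self a]
  have hhalf : 1 / 2 ≤ 1 - a := by linarith [le_abs_self a]
  rw [show 1 / (1 - a) - 1 = a / (1 - a) by field_simp; ring, abs_div, abs_of_pos hpos,
    div_le_iff₀ hpos]
  nlinarith [abs_nonneg a]

lemma abs_alpha_lt_half (n r j : ℕ) (hj : j ∈ Icc (1 + n / r) (n - n / r - 1)) :
    |alpha n r j| < 1 / 2 := by
  rcases Nat.eq_zero_or_pos r with rfl | hr
  · simp [alpha]
  rw [mem_Icc] at hj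
  have hjn : j ≤ n := by generalize n / r = q at hj; omega
  have hmin : n / r + 1 ≤ min j (n - j) := by generalize n / r = q at hj ⊢; omega
  have hlt : (n : ℝ) < r * (min j (n - j) : ℕ) := by
    have : n < r * min j (n - j) :=
      (Nat.lt_mul_div_succ n hr).trans_le (Nat.mul_le_mul_left r hmin)
    exact_mod_cast this
  have h := two_mul_min_mul_abs_alpha_le n r j hjn
  by_contra! hge
  nlinarith

lemma sum_abs_one_div_beta_sub_one_le (n r : ℕ) :
    ∑ j ∈ Icc (1 + n / r) (n - n / r - 1), |1 / beta n r j - 1|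
      ≤ 2 * ∑ j ∈ Icc 1 (n - 1), |alpha n r j| := by
  have hterm : ∀ j ∈ Icc (1 + n / r) (n - n / r - 1),
      |1 / beta n r j - 1| ≤ 2 * |alpha n r j| :=
    fun j hj => abs_one_div_one_sub_sub_one_le (abs_alpha_lt_half n r j hj).le
  calc ∑ j ∈ Icc (1 + n / r) (n - n / r - 1), |1 / beta n r j - 1|
      ≤ ∑ j ∈ Icc (1 + n / r) (n - n / r - 1), 2 * |alpha n r j| := sum_le_sum hterm
    _ ≤ ∑ j ∈ Icc 1 (n - 1), 2 * |alpha n r j| :=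
      sum_le_sum_of_subset_of_nonneg
        (Icc_subset_Icc (Nat.le_add_right 1 _) (by generalize n / r = q; omega))
        fun _ _ _ => by positivity
    _ = 2 * ∑ j ∈ Icc 1 (n - 1), |alpha n r j| := by rw [mul_sum]

theorem eigenvalue_sum_bounds (r : ℕ → ℕ) :
    ∃ C : ℝ, 0 < C ∧ ∀ n : ℕ, 2 ≤ n → 0 < 2 * r n → 2 * r n < n →
      (∑ j ∈ Finset.Icc 1 n, |alpha n (r n) j|
          ≤ C * n * Real.log n / r n) ∧
      (∑ j ∈ Finset.Icc (1 + n / r n) (n - n / r n - 1), |1 / beta n (r n) j - 1|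
          ≤ C * n * Real.log n / r n) := by
  refine ⟨6, by norm_num, fun n hn hr hrn => ?_⟩
  have hR : (0 : ℝ) < r n := by exact_mod_cast (by omega : 0 < r n)
  have hRn : 2 * (r n : ℝ) ≤ n := by exact_mod_cast hrn.le
  have hlog : (n : ℝ) ≤ 2 * n * log n := by
    have : log 2 ≤ log n := log_le_log two_pos (by exact_mod_cast hn)
    nlinarith [log_two_gt_d9]
  have hsum := mul_sum_abs_alpha_le n (r n)
  have hsplit : ∑ j ∈ Icc 1 n, |alpha n (r n) j|
      = ∑ j ∈ Icc 1 (n - 1), |alpha n (r n) j| + |alpha n (r n) n| := by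
    have h := sum_Icc_succ_top (show 1 ≤ n - 1 + 1 by omega) (fun j => |alpha n (r n) j|)
    rwa [Nat.sub_add_cancel (by omega : 1 ≤ n)] at h
  have hlast := abs_alpha_le_one n (r n) n
  have hbeta := sum_abs_one_div_beta_sub_one_le n (r n)
  constructor
  · rw [le_div_iff₀ hR, hsplit]
    nlinarith
  · rw [le_div_iff₀ hR]
    nlinarith

end
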